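/- The Gini index is additive on comonotonic probability vectors: if probability vectors p and q on Fin d admit a common sorting permutation π, then for all reals λ₁, λ₂ ≥ 0 with λ₁ + λ₂ = 1, G(λ₁·p + λ₂·q) = λ₁·G(p) + λ₂·G(q). -/

import Mathlib

/-- A probability vector on `Fin d`: nonnegative entries summing to 1. -/
def IsProbVec {d : ℕ} (p : Fin d → ℝ) : Prop :=
  (∀ r, 0 ≤ p r) ∧ ∑ r, p r = 1

/-- `π` is a sorting permutation for `p`: it arranges the values of `p` in ascending order. -/
def IsSortingPerm {d : ℕ} (p : Fin d → ℝ) (π : Equiv.Perm (Fin d)) : Prop :=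
  ∀ k l : Fin d, k ≤ l → p (π k) ≤ p (π l)

/-- The Lorenz values of `p` computed with the sorting permutation `π`:
`L(p, ℓ) = ∑_{k=0}^{ℓ} p (π k)`. -/
def lorenz {d : ℕ} (p : Fin d → ℝ) (π : Equiv.Perm (Fin d)) (ℓ : Fin d) : ℝ :=
  ∑ k ∈ Finset.Iic ℓ, p (π k)

/-- The Gini index of `p`, computed with the sorting permutation `π`:
`G(p) = 1 − (2/(d+1)) · ∑_{ℓ=0}^{d−1} L(p, ℓ)`
(independent of the choice of sorting permutation). -/
noncomputable def gini {d : ℕ} (p : Fin d → ℝ) (π : Equiv.Perm (Fin d)) : ℝ :=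
  1 - (2 / ((d : ℝ) + 1)) * ∑ ℓ : Fin d, lorenz p π ℓ

/-!
A common sorting permutation of `p` and `q` also sorts every nonnegative combination of them, and
the Gini index does not depend on which sorting permutation is used. With one permutation fixed,
Lorenz values are linear in the vector, so the Gini index is affine along `λ₁ + λ₂ = 1`.
-/

namespace IsSortingPerm

variable {d : ℕ} {p q : Fin d → ℝ} {π σ : Equiv.Perm (Fin d)}

theorem comp_eq (hπ : IsSortingPerm p π) (hσ : IsSortingPerm p σ) : p ∘ π = p ∘ σ :=
  Tuple.unique_monotone (fun _ _ h => hπ _ _ h) (fun _ _ h => hσ _ _ h)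

theorem gini_eq (hπ : IsSortingPerm p π) (hσ : IsSortingPerm p σ) : gini p π = gini p σ := by
  simp only [gini, lorenz, ← Function.comp_apply (f := p), hπ.comp_eq hσ]

theorem mul_add_mul (hp : IsSortingPerm p π) (hq : IsSortingPerm q π) {a b : ℝ}
    (ha : 0 ≤ a) (hb : 0 ≤ b) : IsSortingPerm (fun r => a * p r + b * q r) π := fun k l hkl =>
  add_le_add (mul_le_mul_of_nonneg_left (hp k l hkl) ha) (mul_le_mul_of_nonneg_left (hq k l hkl) hb)

end IsSortingPerm

theorem lorenz_mul_add_mul {d : ℕ} (p q : Fin d → ℝ) (π : Equiv.Perm (Fin d)) (a b : ℝ)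
    (ℓ : Fin d) :
    lorenz (fun r => a * p r + b * q r) π ℓ = a * lorenz p π ℓ + b * lorenz q π ℓ := by
  simp only [lorenz, Finset.sum_add_distrib, Finset.mul_sum]

theorem gini_mul_add_mul {d : ℕ} (p q : Fin d → ℝ) (π : Equiv.Perm (Fin d)) {a b : ℝ}
    (hab : a + b = 1) :
    gini (fun r => a * p r + b * q r) π = a * gini p π + b * gini q π := by
  simp only [gini, lorenz_mul_add_mul, Finset.sum_add_distrib, ← Finset.mul_sum]
  linear_combination (-1 : ℝ) * hab

theorem gini_additive_of_comonotonic_general {d : ℕ} (p q : Fin d → ℝ)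
    (π : Equiv.Perm (Fin d)) (hπp : IsSortingPerm p π) (hπq : IsSortingPerm q π)
    (lam₁ lam₂ : ℝ) (h₁ : 0 ≤ lam₁) (h₂ : 0 ≤ lam₂) (hsum : lam₁ + lam₂ = 1)
    (πm : Equiv.Perm (Fin d)) (hπm : IsSortingPerm (fun r => lam₁ * p r + lam₂ * q r) πm) :
    gini (fun r => lam₁ * p r + lam₂ * q r) πm = lam₁ * gini p π + lam₂ * gini q π := by
  rw [hπm.gini_eq (hπp.mul_add_mul hπq h₁ h₂), gini_mul_add_mul p q π hsum]

/-- The Gini index is additive on comonotonic probability vectors: if probability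
vectors `p` and `q` on `Fin d` admit a common sorting permutation `π`, then for all reals
`λ₁, λ₂ ≥ 0` with `λ₁ + λ₂ = 1`, `G(λ₁·p + λ₂·q) = λ₁·G(p) + λ₂·G(q)`
(with the Gini index of the mixture computed via any sorting permutation for it). -/
theorem gini_additive_of_comonotonic {d : ℕ} (hd : 1 ≤ d) (p q : Fin d → ℝ)
    (hp : IsProbVec p) (hq : IsProbVec q)
    (π : Equiv.Perm (Fin d)) (hπp : IsSortingPerm p π) (hπq : IsSortingPerm q π)
    (lam₁ lam₂ : ℝ) (h₁ : 0 ≤ lam₁) (h₂ : 0 ≤ lam₂) (hsum : lam₁ + lam₂ = 1)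
    (πm : Equiv.Perm (Fin d)) (hπm : IsSortingPerm (fun r => lam₁ * p r + lam₂ * q r) πm) :
    gini (fun r => lam₁ * p r + lam₂ * q r) πm = lam₁ * gini p π + lam₂ * gini q π :=
  gini_additive_of_comonotonic_general p q π hπp hπq lam₁ lam₂ h₁ h₂ hsum πm hπm
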